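/- Let C be a closed non-backtracking walk from u whose first and last edges are distinct, and let W be a non-backtracking walk from v to u whose last edge differs from both the first and last edges of C. Then W ∘ C ∘ reverse(W) and W ∘ C ∘ C ∘ reverse(W) are closed non-backtracking walks from v, and for every edge-weight function F, 2·F(W) = 2·F(W ∘ C ∘ reverse(W)) − F(W ∘ C ∘ C ∘ reverse(W)). -/

import Mathlib

/-!
Non-backtracking is a condition on consecutive edges only (a walk is non-backtracking iff no two
consecutive edges coincide), so a concatenation of non-backtracking walks is non-backtracking as
soon as the edges meeting at each junction differ; the hypotheses on first and last edges are
exactly these junction conditions. Weights are additive under concatenation and invariant under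
reversal, so `F(W ∘ C ∘ W⁻¹) = 2 F(W) + F(C)` and `F(W ∘ C ∘ C ∘ W⁻¹) = 2 F(W) + 2 F(C)`.
-/

open SimpleGraph

variable {V : Type*}

/-- A walk is non-backtracking if no vertex equals the vertex two steps later. -/
def NonBacktracking {G : SimpleGraph V} {u v : V} (p : G.Walk u v) : Prop :=
  ∀ i : ℕ, i + 2 < p.support.length → p.support[i]? ≠ p.support[i + 2]?

/-- The weight of a walk: the sum of the weights of its edges, with multiplicity. -/
def walkWeight {G : SimpleGraph V} (F : Sym2 V → ℝ) {u v : V} (p : G.Walk u v) : ℝ :=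
  (p.edges.map F).sum

/-- An edge `e` is revealed by a set `S` of vertices if an integer combination of weights of
closed non-backtracking walks from vertices of `S` equals a nonzero multiple of the weight
of `e`, for every weight function. -/
def RevealedBySet (G : SimpleGraph V) (S : Set V) (e : Sym2 V) : Prop :=
  ∃ (l : ℕ) (w : Fin l → V) (W : ∀ i, G.Walk (w i) (w i)) (c : Fin l → ℤ) (ce : ℤ),
    (∀ i, w i ∈ S) ∧ (∀ i, NonBacktracking (W i)) ∧ (∀ i, c i ≠ 0) ∧ ce ≠ 0 ∧
    ∀ F : Sym2 V → ℝ, ∑ i, (c i : ℝ) * walkWeight F (W i) = (ce : ℝ) * F e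

/-- A walk `W` is revealed by the vertex `v`. -/
def WalkRevealedBy (G : SimpleGraph V) (v : V) {a b : V} (W : G.Walk a b) : Prop :=
  ∃ (l : ℕ) (Ws : Fin l → G.Walk v v) (c : Fin l → ℤ) (cW : ℤ),
    (∀ i, NonBacktracking (Ws i)) ∧ (∀ i, c i ≠ 0) ∧ cW ≠ 0 ∧
    ∀ F : Sym2 V → ℝ, ∑ i, (c i : ℝ) * walkWeight F (Ws i) = (cW : ℝ) * walkWeight F W

/-- `G` is odometric: every edge is revealed by every single vertex. -/
def Odometric (G : SimpleGraph V) : Prop :=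
  ∀ v : V, ∀ e ∈ G.edgeSet, RevealedBySet G {v} e

/-- `u` is a cut vertex of `G`. -/
def IsCutVertex (G : SimpleGraph V) (u : V) : Prop :=
  G.Connected ∧ ¬ (G.induce {x : V | x ≠ u}).Connected

/-- The induced subgraph on `B` is 2-connected. -/
def TwoConnectedOn (G : SimpleGraph V) (B : Set V) : Prop :=
  3 ≤ B.ncard ∧ (G.induce B).Connected ∧ ∀ u ∈ B, (G.induce (B \ {u})).Connected

/-- `B` is a maximal 2-connected block of `G`. -/
def IsBlock (G : SimpleGraph V) (B : Set V) : Prop :=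
  TwoConnectedOn G B ∧ ∀ B', B ⊆ B' → TwoConnectedOn G B' → B' = B

section

variable {G : SimpleGraph V}

lemma nonBacktracking_nil {u : V} : NonBacktracking (Walk.nil : G.Walk u u) := by
  intro i hi
  simp at hi

lemma nonBacktracking_cons_nil {u w : V} (h : G.Adj u w) :
    NonBacktracking (Walk.cons h Walk.nil) := by
  intro i hi
  simp at hi

lemma nonBacktracking_cons_cons {u w x y : V} (h : G.Adj u w) (h' : G.Adj w x)
    (q : G.Walk x y) :
    NonBacktracking (Walk.cons h (Walk.cons h' q)) ↔
      u ≠ x ∧ NonBacktracking (Walk.cons h' q) := by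
  simp only [NonBacktracking, Walk.support_cons]
  rw [← q.cons_tail_support]
  simp only [List.length_cons]
  constructor
  · intro hnb
    exact ⟨fun hux => hnb 0 (by omega) (by simp [hux]),
      fun i hi => by simpa using hnb (i + 1) (by omega)⟩
  · rintro ⟨hux, hnb⟩ (_ | i) hi
    · simpa using hux
    · simpa using hnb i (by omega)

theorem nonBacktracking_iff_isChain_edges :
    ∀ {u v : V} (p : G.Walk u v), NonBacktracking p ↔ p.edges.IsChain (· ≠ ·)
  | _, _, .nil => by simp [nonBacktracking_nil]
  | _, _, .cons h .nil => by simp [nonBacktracking_cons_nil]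
  | _, _, .cons h (.cons h' q) => by
    rw [nonBacktracking_cons_cons, nonBacktracking_iff_isChain_edges]
    simp [h.ne]

theorem NonBacktracking.append {u v w : V} {p : G.Walk u v} {q : G.Walk v w}
    (hp : NonBacktracking p) (hq : NonBacktracking q)
    (hpq : p.edges.getLast? ≠ q.edges.head?) :
    NonBacktracking (p.append q) := by
  rw [nonBacktracking_iff_isChain_edges] at hp hq ⊢
  rw [Walk.edges_append, List.isChain_append]
  refine ⟨hp, hq, fun x hx y hy hxy => hpq ?_⟩
  rw [hx, hy, hxy]

theorem NonBacktracking.reverse {u v : V} {p : G.Walk u v} (hp : NonBacktracking p) :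
    NonBacktracking p.reverse := by
  rw [nonBacktracking_iff_isChain_edges] at hp ⊢
  rw [Walk.edges_reverse, List.isChain_reverse]
  exact hp.imp fun _ _ => Ne.symm

theorem walkWeight_append (F : Sym2 V → ℝ) {u v w : V} (p : G.Walk u v) (q : G.Walk v w) :
    walkWeight F (p.append q) = walkWeight F p + walkWeight F q := by
  simp [walkWeight, Walk.edges_append]

theorem walkWeight_reverse (F : Sym2 V → ℝ) {u v : V} (p : G.Walk u v) :
    walkWeight F p.reverse = walkWeight F p := by
  simp [walkWeight, Walk.edges_reverse, List.sum_reverse]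

end

/-- if `C` is a closed non-backtracking walk from `u` with distinct first and
last edges, and `W` is a non-backtracking walk from `v` to `u` whose last edge differs from
both the first and last edges of `C`, then `W ∘ C ∘ W⁻¹` and `W ∘ C ∘ C ∘ W⁻¹` are closed
non-backtracking walks from `v` and `2 F(W) = 2 F(W ∘ C ∘ W⁻¹) - F(W ∘ C ∘ C ∘ W⁻¹)`. -/
theorem doubling_trick {G : SimpleGraph V} {u v : V} (C : G.Walk u u) (W : G.Walk v u)
    (hC : NonBacktracking C) (hW : NonBacktracking W)
    (hCfl : C.edges.head? ≠ C.edges.getLast?)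
    (hWf : W.edges.getLast? ≠ C.edges.head?)
    (hWl : W.edges.getLast? ≠ C.edges.getLast?) :
    NonBacktracking (W.append (C.append W.reverse)) ∧
    NonBacktracking (W.append (C.append (C.append W.reverse))) ∧
    ∀ F : Sym2 V → ℝ,
      2 * walkWeight F W =
        2 * walkWeight F (W.append (C.append W.reverse)) -
          walkWeight F (W.append (C.append (C.append W.reverse))) := by
  have hC_ne_nil : C.edges ≠ [] := by
    rintro h
    simp [h] at hCfl
  have head_append {x : V} (p : G.Walk u x) : (C.append p).edges.head? = C.edges.head? := by
    rw [Walk.edges_append, List.head?_append_of_ne_nil _ hC_ne_nil]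
  have hCW : NonBacktracking (C.append W.reverse) :=
    hC.append hW.reverse (by rw [Walk.edges_reverse, List.head?_reverse]; exact hWl.symm)
  have hCCW : NonBacktracking (C.append (C.append W.reverse)) :=
    hC.append hCW (by rw [head_append]; exact hCfl.symm)
  refine ⟨hW.append hCW (by rwa [head_append]), hW.append hCCW (by rwa [head_append]),
    fun F => ?_⟩
  simp only [walkWeight_append, walkWeight_reverse]
  ring
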